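/- For all integers n ≥ 0, bt(4n+3) ≡ 0 (mod 4). -/

import Mathlib

open PowerSeries

/-- Truncated version of `fₖ = ∏_{i≥1} (1 - q^{k i})`: the product over `1 ≤ i ≤ N`,
which has the same coefficients as the infinite product in degrees `≤ N`. -/
noncomputable def fTrunc (k N : ℕ) : PowerSeries ℤ :=
  ∏ i ∈ Finset.Icc 1 N, (1 - (PowerSeries.X : PowerSeries ℤ) ^ (k * i))

/-- `bt n` is the `n`-th coefficient of `f₄³ / (f₁⁶ f₂³)`, the number of
overcubic partition triples of `n`. -/
noncomputable def bt (n : ℕ) : ℤ :=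
  PowerSeries.coeff (R := ℤ) n
    ((fTrunc 4 n) ^ 3 * PowerSeries.invOfUnit ((fTrunc 1 n) ^ 6 * (fTrunc 2 n) ^ 3) 1)

/-!
Modulo 4 one has `(1 - x)⁴ ≡ (1 - x²)²` and `(1 - x)²(1 - x²)(1 + 2x/(1 - x²)) ≡ 1 - x⁴`, so factor
by factor `f₄³/(f₁⁶f₂³) ≡ ∏ⱼ (1 + 2qʲ/(1 - q²ʲ)) ≡ 1 + 2 ∑ⱼ qʲ/(1 - q²ʲ)`, the last step because
`4 ≡ 0`. For odd `m` the coefficient of `qᵐ` in this Lambert series is the number of divisors of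
`m`, hence `bt m ≡ 2 d(m) (mod 4)`. When `m ≡ 3 (mod 4)`, `m` is not a square, so `d ↦ m / d`
pairs off its divisors and `d(m)` is even.
-/

open Finset

section CharFour

variable {R : Type*} [CommRing R]

theorem prod_one_add_two_mul_of_four_eq_zero (h4 : (4 : R) = 0) {ι : Type*} (s : Finset ι)
    (a : ι → R) : ∏ i ∈ s, (1 + 2 * a i) = 1 + 2 * ∑ i ∈ s, a i := by
  classical
  induction s using Finset.induction_on with
  | empty => simp
  | insert i s hi ih =>
    rw [Finset.prod_insert hi, Finset.sum_insert hi, ih]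
    linear_combination (a i * ∑ j ∈ s, a j) * h4

theorem one_sub_pow_four_of_four_eq_zero (h4 : (4 : R) = 0) (x : R) :
    (1 - x) ^ 4 = (1 - x ^ 2) ^ 2 := by
  linear_combination (-x + 2 * x ^ 2 - x ^ 3) * h4

theorem one_sub_pow_six_mul_one_sub_sq_pow_three (h4 : (4 : R) = 0) {x g : R}
    (hg : (1 - x ^ 2) * g = 1) :
    (1 - x) ^ 6 * (1 - x ^ 2) ^ 3 * (1 + 2 * x * g) = (1 - x ^ 4) ^ 3 := by
  have hkey : (1 - x) ^ 2 * (1 - x ^ 2) * (1 + 2 * x * g) = 1 - x ^ 4 := by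
    linear_combination (2 * x * (1 - x) ^ 2) * hg + (x ^ 3 - x ^ 2) * h4
  calc (1 - x) ^ 6 * (1 - x ^ 2) ^ 3 * (1 + 2 * x * g)
      = (1 - x) ^ 4 * (1 - x ^ 2) ^ 2 * ((1 - x) ^ 2 * (1 - x ^ 2) * (1 + 2 * x * g)) := by ring
    _ = ((1 - x ^ 2) ^ 2) ^ 2 * (1 - x ^ 4) := by
      rw [one_sub_pow_four_of_four_eq_zero h4, hkey]; ring
    _ = (1 - x ^ 4) ^ 3 := by
      rw [← pow_mul, one_sub_pow_four_of_four_eq_zero h4, ← pow_mul]; ring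

end CharFour

theorem Nat.two_mul_dvd_sub_iff_dvd {m j : ℕ} (hm : Odd m) (hj : j ≤ m) :
    2 * j ∣ m - j ↔ j ∣ m := by
  constructor
  · intro h
    have := Nat.dvd_add (dvd_trans (Dvd.intro_left 2 rfl) h) (dvd_refl j)
    rwa [Nat.sub_add_cancel hj] at this
  · rintro ⟨k, rfl⟩
    obtain ⟨t, rfl⟩ := Nat.Odd.of_mul_right hm
    exact ⟨t, by rw [Nat.mul_add, mul_one, Nat.add_sub_cancel]; ring⟩

theorem Nat.even_card_divisors_of_not_isSquare {m : ℕ} (hm : ¬IsSquare m) :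
    Even #m.divisors := by
  have hdiv : ∀ d ∈ m.divisors, m / d ∈ m.divisors := fun d hd =>
    Nat.mem_divisors.2 ⟨Nat.div_dvd_of_dvd (Nat.dvd_of_mem_divisors hd), (Nat.mem_divisors.1 hd).2⟩
  have hinv : ∀ d ∈ m.divisors, m / (m / d) = d := fun d hd =>
    Nat.div_div_self (Nat.dvd_of_mem_divisors hd) (Nat.mem_divisors.1 hd).2
  have hswap : ∀ d ∈ m.divisors, d * d < m ↔ m < m / d * (m / d) := fun d hd => by
    have hd0 := Nat.pos_of_mem_divisors hd
    have he0 := Nat.pos_of_mem_divisors (hdiv d hd)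
    generalize he : m / d = e at he0
    obtain rfl : d * e = m := he ▸ Nat.mul_div_cancel' (Nat.dvd_of_mem_divisors hd)
    rw [Nat.mul_lt_mul_left hd0, Nat.mul_lt_mul_right he0]
  rw [exists_disjoint_union_of_even_card_iff]
  refine ⟨{d ∈ m.divisors | d * d < m}, {d ∈ m.divisors | m < d * d}, ?_,
    disjoint_filter.2 fun d _ h => by omega, card_nbij' (m / ·) (m / ·) ?_ ?_ ?_ ?_⟩
  · rw [← filter_or, filter_true_of_mem fun d _ => ?_]
    have : d * d ≠ m := fun h => hm ⟨d, h.symm⟩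
    omega
  all_goals
    intro d hd
    simp only [coe_filter, Set.mem_ofPred_eq] at hd ⊢
  · exact ⟨hdiv d hd.1, (hswap d hd.1).1 hd.2⟩
  · refine ⟨hdiv d hd.1, ?_⟩
    rw [hswap _ (hdiv d hd.1), hinv d hd.1]
    exact hd.2
  · exact hinv d hd.1
  · exact hinv d hd.1

theorem Nat.not_isSquare_of_mod_four_eq_three {m : ℕ} (hm : m % 4 = 3) : ¬IsSquare m := by
  rintro ⟨r, rfl⟩
  have hsq : ∀ z : ZMod 4, z * z ≠ 3 := by decide
  apply hsq r
  rw [← Nat.cast_mul, ← ZMod.natCast_mod, hm]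
  rfl

namespace PowerSeries

variable (R : Type*) [CommRing R]

noncomputable def invOneSubXPow (s : ℕ) : R⟦X⟧ :=
  mk fun n => if s ∣ n then 1 else 0

variable {R}

theorem invOneSubXPow_eq_expand {s : ℕ} (hs : s ≠ 0) :
    invOneSubXPow R s = expand s hs (mk 1) := by
  ext n
  rw [invOneSubXPow, coeff_mk, coeff_expand]
  split_ifs <;> simp

theorem one_sub_X_pow_mul_invOneSubXPow {s : ℕ} (hs : s ≠ 0) :
    (1 - X ^ s) * invOneSubXPow R s = 1 := by
  rw [invOneSubXPow_eq_expand hs, mul_comm, ← expand_X s hs, ← map_one (expand s hs),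
    ← map_sub, ← map_mul, mk_one_mul_one_sub_eq_one, map_one]

theorem coeff_X_pow_mul_invOneSubXPow (a s n : ℕ) :
    coeff n (X ^ a * invOneSubXPow R s) = if a ≤ n ∧ s ∣ n - a then 1 else 0 := by
  rw [coeff_X_pow_mul', invOneSubXPow, coeff_mk]
  split_ifs <;> simp_all

end PowerSeries

section Truncated

variable {R : Type*} [CommRing R]

variable (R) in
noncomputable def oddLambert (N : ℕ) : R⟦X⟧ :=
  ∑ j ∈ Icc 1 N, X ^ j * invOneSubXPow R (2 * j)

theorem map_fTrunc (k N : ℕ) :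
    map (Int.castRingHom R) (fTrunc k N) = ∏ i ∈ Icc 1 N, (1 - (X ^ i) ^ k) := by
  simp [fTrunc, map_prod, pow_mul']

theorem constantCoeff_fTrunc {k : ℕ} (hk : k ≠ 0) (N : ℕ) : constantCoeff (fTrunc k N) = 1 := by
  refine (map_prod _ _ _).trans (prod_eq_one fun i hi => ?_)
  have : k * i ≠ 0 := Nat.mul_ne_zero hk (by simp at hi; omega)
  simp [this]

theorem fTrunc_mul_one_add_two_mul_oddLambert (h4 : (4 : R) = 0) (N : ℕ) :
    map (Int.castRingHom R) (fTrunc 1 N) ^ 6 * map (Int.castRingHom R) (fTrunc 2 N) ^ 3 *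
      (1 + 2 * oddLambert R N) = map (Int.castRingHom R) (fTrunc 4 N) ^ 3 := by
  have h4' : (4 : R⟦X⟧) = 0 := by rw [← map_ofNat C 4, h4, map_zero]
  rw [oddLambert, ← prod_one_add_two_mul_of_four_eq_zero h4', map_fTrunc, map_fTrunc, map_fTrunc,
    ← prod_pow, ← prod_pow, ← prod_pow, ← prod_mul_distrib, ← prod_mul_distrib]
  refine prod_congr rfl fun j hj => ?_
  have hg : (1 - (X ^ j) ^ 2) * invOneSubXPow R (2 * j) = 1 := by
    rw [← pow_mul']
    exact one_sub_X_pow_mul_invOneSubXPow (by simp at hj; omega)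
  simpa [mul_assoc] using one_sub_pow_six_mul_one_sub_sq_pow_three h4' hg

end Truncated

theorem coeff_oddLambert_of_odd {R : Type*} [CommRing R] {m : ℕ} (hm : Odd m) :
    coeff m (oddLambert R m) = #m.divisors := by
  simp only [oddLambert, map_sum, coeff_X_pow_mul_invOneSubXPow, sum_boole]
  congr 2
  ext j
  simp only [mem_filter, mem_Icc, Nat.mem_divisors]
  constructor
  · rintro ⟨⟨-, hj⟩, -, h⟩
    exact ⟨(Nat.two_mul_dvd_sub_iff_dvd hm hj).1 h, hm.pos.ne'⟩
  · rintro ⟨h, -⟩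
    have hj := Nat.le_of_dvd hm.pos h
    exact ⟨⟨Nat.pos_of_dvd_of_pos h hm.pos, hj⟩, hj, (Nat.two_mul_dvd_sub_iff_dvd hm hj).2 h⟩

theorem bt_cast_zmod_four {m : ℕ} (hm : m ≠ 0) :
    (bt m : ZMod 4) = 2 * coeff m (oddLambert (ZMod 4) m) := by
  set φ := Int.castRingHom (ZMod 4)
  set D := invOfUnit (fTrunc 1 m ^ 6 * fTrunc 2 m ^ 3) 1
  have hD : map φ (fTrunc 1 m) ^ 6 * map φ (fTrunc 2 m) ^ 3 * map φ D = 1 := by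
    rw [← map_pow, ← map_pow, ← map_mul, ← map_mul,
      mul_invOfUnit _ _ (by simp [constantCoeff_fTrunc]), map_one]
  have hquot : map φ (fTrunc 4 m ^ 3 * D) = 1 + 2 * oddLambert (ZMod 4) m := by
    rw [map_mul, map_pow]
    linear_combination (1 + 2 * oddLambert (ZMod 4) m) * hD -
      map φ D * fTrunc_mul_one_add_two_mul_oddLambert (R := ZMod 4) (by decide) m
  rw [show (bt m : ZMod 4) = φ (bt m) from rfl, bt, ← coeff_map, hquot, map_add, coeff_one,
    if_neg hm, zero_add, ← map_ofNat C 2, coeff_C_mul]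

theorem bt_cast_zmod_four_of_odd {m : ℕ} (hm : Odd m) : (bt m : ZMod 4) = 2 * #m.divisors := by
  rw [bt_cast_zmod_four hm.pos.ne', coeff_oddLambert_of_odd hm]

theorem stmt1 (n : ℕ) : bt (4 * n + 3) ≡ 0 [ZMOD 4] := by
  have hodd : Odd (4 * n + 3) := ⟨2 * n + 1, by ring⟩
  obtain ⟨k, hk⟩ := Nat.even_card_divisors_of_not_isSquare
    (Nat.not_isSquare_of_mod_four_eq_three (m := 4 * n + 3) (by omega))
  refine Int.modEq_zero_iff_dvd.2 ((ZMod.intCast_zmod_eq_zero_iff_dvd _ 4).1 ?_)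
  rw [bt_cast_zmod_four_of_odd hodd, hk]
  push_cast
  ring_nf
  reduce_mod_char
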